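/- arXiv:1510.09073 — 2 statements merged into one kernel-verified Lean document; each statement's English description precedes it below -/
import Mathlib

section
/- Main theorem (autocratic strategies in arbitrary action spaces): Let S_X and S_Y be measurable spaces with bounded measurable payoff functions u_X, u_Y : S_X × S_Y → ℝ, let λ ∈ (0,1), let σ_X be a memory-one strategy for player X with initial action σ_X^0, and let α, β, γ ∈ ℝ. Suppose there is a bounded measurable function ψ : S_X → ℝ such that for every x ∈ S_X and y ∈ S_Y: α·u_X(x,y) + β·u_Y(x,y) + γ = ψ(x) − λ·∫_{S_X} ψ(s) dσ_X[x,y](s) − (1−λ)·∫_{S_X} ψ(s) dσ_X^0(s). Then for every play sequence (ν_t)_{t≥0} compatible with (σ_X^0, σ_X), the expected discounted payoffs satisfy α·π_X + β·π_Y + γ = 0. -/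
/-!
Integrating the Press–Dyson identity against `ν t` gives
`α E_t[u_X] + β E_t[u_Y] + γ = a t - λ a (t+1) - (1-λ) a 0` with `a t = ∫ ψ(x) dν_t`:
compatibility says that X's marginal of `ν (t+1)` is `σX ∘ₘ ν t`, which turns the kernel term
into `a (t+1)`, and it identifies `∫ ψ dσ0` with `a 0`. Weighted by `λ^t`, the right-hand side
telescopes to `a 0 - a 0 = 0`.
-/

open MeasureTheory ProbabilityTheory

section Integrals

variable {Ω : Type*} [MeasurableSpace Ω] {μ : Measure Ω} {f : Ω → ℝ} {C : ℝ}

lemma integrable_of_abs_le [IsFiniteMeasure μ] (hf : Measurable f) (hC : ∀ x, |f x| ≤ C) :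
    Integrable f μ :=
  .of_bound hf.aestronglyMeasurable C (ae_of_all _ hC)

lemma abs_integral_le_of_abs_le [IsProbabilityMeasure μ] (hC : ∀ x, |f x| ≤ C) :
    |∫ x, f x ∂μ| ≤ C := by
  simpa using norm_integral_le_of_norm_le_const (μ := μ) (f := f) (ae_of_all _ hC)

lemma mul_integral_add_mul_integral_add_const_eq [IsProbabilityMeasure μ] {f g h k : Ω → ℝ}
    (hf : Integrable f μ) (hg : Integrable g μ) (hh : Integrable h μ) (hk : Integrable k μ)
    {a b c r d : ℝ} (hfghk : ∀ x, a * f x + b * g x + c = h x - r * k x - d) :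
    a * ∫ x, f x ∂μ + b * ∫ x, g x ∂μ + c = ∫ x, h x ∂μ - r * ∫ x, k x ∂μ - d := by
  have hfg : Integrable (fun x => a * f x + b * g x) μ := (hf.const_mul a).add (hg.const_mul b)
  have hhk : Integrable (fun x => h x - r * k x) μ := hh.sub (hk.const_mul r)
  have := integral_congr_ae (μ := μ) (ae_of_all _ hfghk)
  simpa [integral_add, integral_sub, integral_const_mul, hf, hg, hh, hk, hf.const_mul,
    hg.const_mul, hk.const_mul, hfg, hhk] using this

end Integrals

section Marginals

variable {X Y Z E : Type*} [MeasurableSpace X] [MeasurableSpace Y] [MeasurableSpace Z]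
  [NormedAddCommGroup E] [NormedSpace ℝ E]

lemma MeasureTheory.Measure.integral_comp {μ : Measure Z} [SFinite μ] {κ : Kernel Z X}
    [IsSFiniteKernel κ] {f : X → E} (hf : Integrable f (κ ∘ₘ μ)) :
    ∫ x, f x ∂(κ ∘ₘ μ) = ∫ z, ∫ x, f x ∂κ z ∂μ := by
  rw [Measure.comp_eq_comp_const_apply] at hf ⊢
  rw [Kernel.integral_comp hf]
  simp

lemma map_fst_eq_of_apply_prod_univ {ν : Measure (X × Y)} {μ : Measure X}
    (h : ∀ E, MeasurableSet E → ν (E ×ˢ Set.univ) = μ E) : ν.map Prod.fst = μ := by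
  ext E hE
  rw [Measure.map_apply measurable_fst hE, ← Set.prod_univ, h E hE]

lemma integral_comp_fst_eq_of_apply_prod_univ {ν : Measure (X × Y)} {μ : Measure X}
    (h : ∀ E, MeasurableSet E → ν (E ×ˢ Set.univ) = μ E) {f : X → E}
    (hf : AEStronglyMeasurable f μ) : ∫ q, f q.1 ∂ν = ∫ x, f x ∂μ := by
  obtain rfl := map_fst_eq_of_apply_prod_univ h
  exact (integral_map measurable_fst.aemeasurable hf).symm

lemma integral_comp_fst_eq_integral_kernel_of_apply_prod_univ {ν : Measure (X × Y)}
    {μ : Measure Z} [SFinite μ] {κ : Kernel Z X} [IsSFiniteKernel κ]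
    (h : ∀ E, MeasurableSet E → ν (E ×ˢ Set.univ) = ∫⁻ z, κ z E ∂μ) {f : X → E}
    (hf : Integrable f (κ ∘ₘ μ)) : ∫ q, f q.1 ∂ν = ∫ z, ∫ x, f x ∂κ z ∂μ := by
  rw [integral_comp_fst_eq_of_apply_prod_univ (μ := κ ∘ₘ μ) (fun E hE => ?_) hf.1,
    Measure.integral_comp hf]
  rw [h E hE, Measure.bind_apply hE κ.aemeasurable]

end Marginals

section DiscountedSums

variable {r : ℝ}

lemma summable_pow_mul_of_abs_le (hr0 : 0 ≤ r) (hr1 : r < 1) {x : ℕ → ℝ} {C : ℝ}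
    (hx : ∀ t, |x t| ≤ C) : Summable fun t => r ^ t * x t := by
  refine .of_norm_bounded ((summable_geometric_of_lt_one hr0 hr1).mul_right C) fun t => ?_
  rw [norm_mul, norm_pow, Real.norm_of_nonneg hr0]
  exact mul_le_mul_of_nonneg_left (hx t) (pow_nonneg hr0 t)

lemma hasSum_pow_mul_sub_mul_succ {a : ℕ → ℝ} (ha : Summable fun t => r ^ t * a t) :
    HasSum (fun t => r ^ t * (a t - r * a (t + 1))) (a 0) := by
  have hsucc := (hasSum_nat_add_iff' 1).mpr ha.hasSum
  rw [Finset.sum_range_one, pow_zero, one_mul] at hsucc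
  have h := ha.hasSum.sub hsucc
  rw [sub_sub_cancel] at h
  exact h.congr_fun fun t => by ring

lemma hasSum_pow_mul_sub_mul_succ_sub_const (hr0 : 0 ≤ r) (hr1 : r < 1) {a : ℕ → ℝ}
    (ha : Summable fun t => r ^ t * a t) :
    HasSum (fun t => r ^ t * (a t - r * a (t + 1) - (1 - r) * a 0)) 0 := by
  have hr : 1 - r ≠ 0 := by linarith
  have h := (hasSum_pow_mul_sub_mul_succ ha).sub
    ((hasSum_geometric_of_lt_one hr0 hr1).mul_left (a 0 * (1 - r)))
  rw [mul_inv_cancel_right₀ hr, sub_self] at h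
  exact h.congr_fun fun t => by ring

end DiscountedSums

theorem autocratic_strategies_general
    {SX SY : Type*} [MeasurableSpace SX] [MeasurableSpace SY]
    (uX uY : SX × SY → ℝ) (huXm : Measurable uX) (huYm : Measurable uY)
    (C : ℝ) (huXb : ∀ q, |uX q| ≤ C) (huYb : ∀ q, |uY q| ≤ C)
    (lam : ℝ) (hlam : lam ∈ Set.Ioo (0 : ℝ) 1)
    (σX : Kernel (SX × SY) SX) [IsMarkovKernel σX]
    (σ0 : Measure SX)
    (α β γ : ℝ)
    (ψ : SX → ℝ) (hψm : Measurable ψ) (Cψ : ℝ) (hψb : ∀ s, |ψ s| ≤ Cψ)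
    (hPD : ∀ x y, α * uX (x, y) + β * uY (x, y) + γ =
      ψ x - lam * ∫ s, ψ s ∂ (σX (x, y)) - (1 - lam) * ∫ s, ψ s ∂ σ0)
    (ν : ℕ → Measure (SX × SY)) (hνp : ∀ t, IsProbabilityMeasure (ν t))
    (hν0 : ∀ E : Set SX, MeasurableSet E → ν 0 (E ×ˢ Set.univ) = σ0 E)
    (hνsucc : ∀ t : ℕ, ∀ E : Set SX, MeasurableSet E →
      ν (t + 1) (E ×ˢ Set.univ) = ∫⁻ q, σX q E ∂ ν t) :
    α * ((1 - lam) * ∑' t : ℕ, lam ^ t * ∫ q, uX q ∂ ν t)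
      + β * ((1 - lam) * ∑' t : ℕ, lam ^ t * ∫ q, uY q ∂ ν t) + γ = 0 := by
  obtain ⟨hlam0, hlam1⟩ := hlam
  set a : ℕ → ℝ := fun t => ∫ q, ψ q.1 ∂ν t
  have ha_bdd : ∀ t, |a t| ≤ Cψ := fun t => abs_integral_le_of_abs_le fun q => hψb q.1
  have ha0 : a 0 = ∫ s, ψ s ∂σ0 :=
    integral_comp_fst_eq_of_apply_prod_univ hν0 hψm.aestronglyMeasurable
  have ha_succ : ∀ t, a (t + 1) = ∫ q, ∫ s, ψ s ∂σX q ∂ν t := fun t =>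
    integral_comp_fst_eq_integral_kernel_of_apply_prod_univ (hνsucc t)
      (integrable_of_abs_le hψm hψb)
  have hstep : ∀ t, α * ∫ q, uX q ∂ν t + β * ∫ q, uY q ∂ν t + γ
      = a t - lam * a (t + 1) - (1 - lam) * a 0 := fun t => by
    rw [ha_succ, ha0]
    exact mul_integral_add_mul_integral_add_const_eq (integrable_of_abs_le huXm huXb)
      (integrable_of_abs_le huYm huYb)
      (integrable_of_abs_le (hψm.comp measurable_fst) fun q => hψb q.1)
      (integrable_of_abs_le hψm.stronglyMeasurable.integral_kernel.measurable
        fun q => abs_integral_le_of_abs_le hψb)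
      fun q => hPD q.1 q.2
  have hgeom := hasSum_geometric_of_lt_one hlam0.le hlam1
  have hX := (summable_pow_mul_of_abs_le hlam0.le hlam1
    fun t => abs_integral_le_of_abs_le (μ := ν t) huXb).hasSum
  have hY := (summable_pow_mul_of_abs_le hlam0.le hlam1
    fun t => abs_integral_le_of_abs_le (μ := ν t) huYb).hasSum
  have hsum := ((hX.mul_left α).add (hY.mul_left β)).add (hgeom.mul_left γ)
  have hzero := hasSum_pow_mul_sub_mul_succ_sub_const hlam0.le hlam1
    (summable_pow_mul_of_abs_le hlam0.le hlam1 ha_bdd)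
  have key := (hsum.congr_fun fun t => by rw [← hstep]; ring).unique hzero
  have hlam_ne : 1 - lam ≠ 0 := by linarith
  field_simp at key
  linear_combination key

/-- **Main theorem: autocratic strategies in arbitrary action spaces.**
If a bounded measurable scaling function `ψ` satisfies the Press–Dyson relation
`α·u_X(x,y) + β·u_Y(x,y) + γ = ψ(x) − lam·∫ ψ dσX[x,y] − (1−lam)·∫ ψ dσ0`
for all `x, y`, then for every play sequence `ν` compatible with `(σ0, σX)` the
expected discounted payoffs satisfy `α·π_X + β·π_Y + γ = 0`. -/
theorem autocratic_strategies
    {SX SY : Type*} [MeasurableSpace SX] [MeasurableSpace SY]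
    (uX uY : SX × SY → ℝ) (huXm : Measurable uX) (huYm : Measurable uY)
    (C : ℝ) (huXb : ∀ q, |uX q| ≤ C) (huYb : ∀ q, |uY q| ≤ C)
    (lam : ℝ) (hlam : lam ∈ Set.Ioo (0 : ℝ) 1)
    (σX : Kernel (SX × SY) SX) [IsMarkovKernel σX]
    (σ0 : Measure SX) [IsProbabilityMeasure σ0]
    (α β γ : ℝ)
    (ψ : SX → ℝ) (hψm : Measurable ψ) (Cψ : ℝ) (hψb : ∀ s, |ψ s| ≤ Cψ)
    (hPD : ∀ x y, α * uX (x, y) + β * uY (x, y) + γ =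
      ψ x - lam * ∫ s, ψ s ∂ (σX (x, y)) - (1 - lam) * ∫ s, ψ s ∂ σ0)
    (ν : ℕ → Measure (SX × SY)) (hνp : ∀ t, IsProbabilityMeasure (ν t))
    (hν0 : ∀ E : Set SX, MeasurableSet E → ν 0 (E ×ˢ Set.univ) = σ0 E)
    (hνsucc : ∀ t : ℕ, ∀ E : Set SX, MeasurableSet E →
      ν (t + 1) (E ×ˢ Set.univ) = ∫⁻ q, σX q E ∂ ν t) :
    α * ((1 - lam) * ∑' t : ℕ, lam ^ t * ∫ q, uX q ∂ ν t)
      + β * ((1 - lam) * ∑' t : ℕ, lam ^ t * ∫ q, uY q ∂ ν t) + γ = 0 :=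
  autocratic_strategies_general uX uY huXm huYm C huXb huYb lam hlam σX σ0 α β γ ψ hψm Cψ hψb hPD ν
    hνp hν0 hνsucc
end

section
/- Two-point autocratic strategies: Let S_X and S_Y be measurable spaces with bounded measurable payoff functions u_X, u_Y : S_X × S_Y → ℝ, let λ ∈ (0,1), and let α, β, γ ∈ ℝ. Write f(x,y) = α·u_X(x,y) + β·u_Y(x,y) + γ. Suppose there exist s_1, s_2 ∈ S_X, φ > 0, and p_0 ∈ [0,1] such that for every y ∈ S_Y: −(1 − (1−λ)p_0)/φ ≤ f(s_1,y) ≤ −(1−λ)(1−p_0)/φ and (1−λ)p_0/φ ≤ f(s_2,y) ≤ (λ + (1−λ)p_0)/φ. Define p(s_1,y) = (1/λ)(φ·f(s_1,y) − (1−λ)p_0 + 1) and p(s_2,y) = (1/λ)(φ·f(s_2,y) − (1−λ)p_0). Then 0 ≤ p(x,y) ≤ 1 for x ∈ {s_1, s_2} and all y ∈ S_Y, and the memory-one strategy σ_X[x,y] = p(x,y)·δ_{s_1} + (1 − p(x,y))·δ_{s_2} with initial action σ_X^0 = p_0·δ_{s_1} + (1−p_0)·δ_{s_2} satisfies: for every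 play sequence (ν_t)_{t≥0} compatible with (σ_X^0, σ_X), α·π_X + β·π_Y + γ = 0. -/
/-!
Let `Q t` be the probability that `X` plays `s₁` in round `t`. Since `X` only ever plays `s₁` or
`s₂`, the choice of `p` makes `φ f(x,y) = lam p(x,y) - 1[x = s₁] + (1 - lam) p₀` on the support of
every `ν t`. Integrating against `ν t` gives `φ 𝔼_t f = lam Q(t+1) - Q t + (1 - lam) Q 0`, whose
discounted sum telescopes to `0`.
-/

open MeasureTheory ProbabilityTheory

section Discounting

variable {Ω : Type*} [MeasurableSpace Ω]

noncomputable def discountedPayoff (lam : ℝ) (ν : ℕ → Measure Ω) (u : Ω → ℝ) : ℝ :=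
  (1 - lam) * ∑' t, lam ^ t * ∫ x, u x ∂ν t

lemma summable_pow_mul_of_abs_le_s4 {lam : ℝ} (hlam : |lam| < 1) {a : ℕ → ℝ} {C : ℝ}
    (ha : ∀ t, |a t| ≤ C) : Summable fun t => lam ^ t * a t :=
  .of_norm_bounded ((summable_geometric_of_lt_one (abs_nonneg lam) hlam).mul_right C) fun t => by
    rw [Real.norm_eq_abs, abs_mul, abs_pow]
    exact mul_le_mul_of_nonneg_left (ha t) (by positivity)

lemma tsum_pow_mul_telescope {lam : ℝ} (hlam : |lam| < 1) {Q : ℕ → ℝ}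
    (hQ : Summable fun t => lam ^ t * Q t) (c : ℝ) :
    ∑' t, lam ^ t * (lam * Q (t + 1) - Q t + c) = c / (1 - lam) - Q 0 := by
  have hshift : Summable fun t => lam ^ (t + 1) * Q (t + 1) := (summable_nat_add_iff 1).2 hQ
  have hgeom : Summable fun t => lam ^ t * c :=
    (summable_geometric_of_abs_lt_one hlam).mul_right c
  calc ∑' t, lam ^ t * (lam * Q (t + 1) - Q t + c)
      = ∑' t, (lam ^ (t + 1) * Q (t + 1) - lam ^ t * Q t + lam ^ t * c) := by
        congr 1; ext t; ring
    _ = (∑' t, lam ^ (t + 1) * Q (t + 1)) - ∑' t, lam ^ t * Q t + (∑' t, lam ^ t) * c := by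
        rw [(hshift.sub hQ).tsum_add hgeom, hshift.tsum_sub hQ, tsum_mul_right]
    _ = c / (1 - lam) - Q 0 := by
        rw [hQ.tsum_eq_zero_add, tsum_geometric_of_abs_lt_one hlam]
        simp only [pow_zero, one_mul]
        ring

lemma abs_integral_le_of_abs_le_s4 {μ : Measure Ω} [IsProbabilityMeasure μ] {u : Ω → ℝ} {C : ℝ}
    (hu : ∀ x, |u x| ≤ C) : |∫ x, u x ∂μ| ≤ C := by
  simpa using norm_integral_le_of_norm_le_const (μ := μ) (f := u) (.of_forall hu)

variable {ν : ℕ → Measure Ω} [∀ t, IsProbabilityMeasure (ν t)]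

lemma discountedPayoff_affine {lam : ℝ} (hlam : |lam| < 1) {u v : Ω → ℝ}
    (hum : Measurable u) (hvm : Measurable v) {C : ℝ} (hu : ∀ x, |u x| ≤ C)
    (hv : ∀ x, |v x| ≤ C) (α β γ : ℝ) :
    discountedPayoff lam ν (fun x => α * u x + β * v x + γ)
      = α * discountedPayoff lam ν u + β * discountedPayoff lam ν v + γ := by
  have hint : ∀ {w : Ω → ℝ}, Measurable w → (∀ x, |w x| ≤ C) → ∀ t, Integrable w (ν t) :=
    fun hwm hw t => .of_bound hwm.aestronglyMeasurable C (.of_forall hw)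
  have hterm : ∀ t, lam ^ t * ∫ x, α * u x + β * v x + γ ∂ν t
      = α * (lam ^ t * ∫ x, u x ∂ν t) + β * (lam ^ t * ∫ x, v x ∂ν t) + lam ^ t * γ := by
    intro t
    rw [integral_add (f := fun x => α * u x + β * v x)
      (((hint hum hu t).const_mul α).add ((hint hvm hv t).const_mul β)) (integrable_const γ),
      integral_add ((hint hum hu t).const_mul α) ((hint hvm hv t).const_mul β),
      integral_const_mul, integral_const_mul, integral_const]
    simp only [probReal_univ, one_smul]
    ring
  have hsu : Summable fun t => lam ^ t * ∫ x, u x ∂ν t :=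
    summable_pow_mul_of_abs_le_s4 hlam fun t => abs_integral_le_of_abs_le_s4 hu
  have hsv : Summable fun t => lam ^ t * ∫ x, v x ∂ν t :=
    summable_pow_mul_of_abs_le_s4 hlam fun t => abs_integral_le_of_abs_le_s4 hv
  have hsum := ((hsu.hasSum.mul_left α).add (hsv.hasSum.mul_left β)).add
    ((hasSum_geometric_of_abs_lt_one hlam).mul_right γ)
  have hlam1 : 1 - lam ≠ 0 := by linarith [(abs_lt.1 hlam).2]
  unfold discountedPayoff
  simp_rw [hterm]
  rw [hsum.tsum_eq]
  field_simp

end Discounting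

section PlaySequence

variable {SX SY : Type*} [MeasurableSpace SX] [MeasurableSpace SY]

structure IsPlaySequence (σ0 : Measure SX) (σX : Kernel (SX × SY) SX)
    (ν : ℕ → Measure (SX × SY)) : Prop where
  init : ∀ E, MeasurableSet E → ν 0 (E ×ˢ Set.univ) = σ0 E
  step : ∀ t E, MeasurableSet E → ν (t + 1) (E ×ˢ Set.univ) = ∫⁻ q, σX q E ∂ν t

variable {σ0 : Measure SX} {σX : Kernel (SX × SY) SX} {ν : ℕ → Measure (SX × SY)}

namespace IsPlaySequence

lemma ae_fst_mem (hν : IsPlaySequence σ0 σX ν) {A : Set SX} (hA : MeasurableSet A)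
    (h0 : σ0 Aᶜ = 0) (hσ : ∀ q : SX × SY, q.1 ∈ A → σX q Aᶜ = 0) (t : ℕ) :
    ∀ᵐ q ∂ν t, q.1 ∈ A := by
  have hcompl : {q : SX × SY | q.1 ∉ A} = Aᶜ ×ˢ Set.univ := by ext; simp
  induction t with
  | zero => rw [ae_iff, hcompl, hν.init _ hA.compl, h0]
  | succ t ih =>
    rw [ae_iff, hcompl, hν.step t _ hA.compl]
    exact (lintegral_congr_ae (ih.mono hσ)).trans lintegral_zero

variable [∀ t, IsProbabilityMeasure (ν t)]

lemma lintegral_kernel_ne_top (hν : IsPlaySequence σ0 σX ν) {E : Set SX} (hE : MeasurableSet E)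
    (t : ℕ) : ∫⁻ q, σX q E ∂ν t ≠ ⊤ := by
  rw [← hν.step t E hE]; exact measure_ne_top _ _

lemma measureReal_succ (hν : IsPlaySequence σ0 σX ν) {E : Set SX} (hE : MeasurableSet E)
    (t : ℕ) : (ν (t + 1)).real (E ×ˢ Set.univ) = ∫ q, (σX q E).toReal ∂ν t := by
  rw [measureReal_def, hν.step t E hE, integral_toReal (σX.measurable_coe hE).aemeasurable
    (ae_lt_top (σX.measurable_coe hE) (hν.lintegral_kernel_ne_top hE t))]

lemma mul_integral_eq (hν : IsPlaySequence σ0 σX ν) {E : Set SX} (hE : MeasurableSet E)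
    {F : SX × SY → ℝ} {lam φ c : ℝ} (t : ℕ)
    (hbal : ∀ᵐ q ∂ν t,
      φ * F q = lam * (σX q E).toReal - E.indicator 1 q.1 + c) :
    φ * ∫ q, F q ∂ν t
      = lam * (ν (t + 1)).real (E ×ˢ Set.univ) - (ν t).real (E ×ˢ Set.univ) + c := by
  have hint : Integrable (fun q => (σX q E).toReal) (ν t) :=
    integrable_toReal_of_lintegral_ne_top (σX.measurable_coe hE).aemeasurable
      (hν.lintegral_kernel_ne_top hE t)
  have hfst :
      (fun q : SX × SY => E.indicator (1 : SX → ℝ) q.1) = (E ×ˢ Set.univ).indicator 1 := by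
    rw [Set.prod_univ]; rfl
  have hind : Integrable (fun q : SX × SY => E.indicator (1 : SX → ℝ) q.1) (ν t) :=
    hfst ▸ (integrable_const (1 : ℝ)).indicator (hE.prod .univ)
  have hind_eq : ∫ q, E.indicator (1 : SX → ℝ) q.1 ∂ν t = (ν t).real (E ×ˢ Set.univ) := by
    rw [hfst, integral_indicator_one (hE.prod .univ)]
  rw [← integral_const_mul, integral_congr_ae hbal,
    integral_add (f := fun q => lam * (σX q E).toReal - E.indicator 1 q.1)
      ((hint.const_mul lam).sub hind) (integrable_const c),
    integral_sub (hint.const_mul lam) hind, integral_const_mul,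
    hind_eq, integral_const, hν.measureReal_succ hE]
  simp

theorem discountedPayoff_eq_zero (hν : IsPlaySequence σ0 σX ν) {lam : ℝ} (hlam : |lam| < 1)
    {E : Set SX} (hE : MeasurableSet E) {F : SX × SY → ℝ} {φ : ℝ} (hφ : φ ≠ 0)
    (hbal : ∀ t, ∀ᵐ q ∂ν t, φ * F q
      = lam * (σX q E).toReal - E.indicator 1 q.1 + (1 - lam) * σ0.real E) :
    discountedPayoff lam ν F = 0 := by
  set Q : ℕ → ℝ := fun t => (ν t).real (E ×ˢ Set.univ)
  have hQ : Summable fun t => lam ^ t * Q t :=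
    summable_pow_mul_of_abs_le_s4 hlam fun t => by
      rw [abs_of_nonneg measureReal_nonneg]; exact measureReal_le_one
  have hQ0 : Q 0 = σ0.real E := by simp only [Q, measureReal_def, hν.init E hE]
  have hlam1 : 1 - lam ≠ 0 := by linarith [(abs_lt.1 hlam).2]
  have hterm : ∀ t, lam ^ t * ∫ q, F q ∂ν t
      = φ⁻¹ * (lam ^ t * (lam * Q (t + 1) - Q t + (1 - lam) * σ0.real E)) := fun t => by
    rw [← hν.mul_integral_eq hE t (hbal t)]
    field_simp
  unfold discountedPayoff
  rw [tsum_congr hterm, tsum_mul_left, tsum_pow_mul_telescope hlam hQ, hQ0]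
  field_simp
  ring

end IsPlaySequence

end PlaySequence
open MeasureTheory ProbabilityTheory

section TwoPoint

variable {S : Type*} [MeasurableSpace S] [MeasurableSingletonClass S] {s₁ s₂ : S} {a : ℝ}

noncomputable def twoPointMeasure (s₁ s₂ : S) (a : ℝ) : Measure S :=
  ENNReal.ofReal a • Measure.dirac s₁ + ENNReal.ofReal (1 - a) • Measure.dirac s₂

lemma twoPointMeasure_singleton_left (h : s₁ ≠ s₂) :
    twoPointMeasure s₁ s₂ a {s₁} = ENNReal.ofReal a := by
  simp [twoPointMeasure, h.symm]

lemma twoPointMeasure_compl_pair : twoPointMeasure s₁ s₂ a {s₁, s₂}ᶜ = 0 := by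
  simp [twoPointMeasure]

end TwoPoint

lemma one_div_mul_add_mem_Icc {lam φ c v : ℝ} (hlam : 0 < lam) (hφ : 0 < φ)
    (hlo : -c / φ ≤ v) (hhi : v ≤ (lam - c) / φ) : 1 / lam * (φ * v + c) ∈ Set.Icc (0 : ℝ) 1 := by
  rw [div_le_iff₀ hφ] at hlo
  rw [le_div_iff₀ hφ] at hhi
  rw [one_div_mul_eq_div]
  exact ⟨div_nonneg (by linarith) hlam.le, (div_le_one hlam).2 (by linarith)⟩

lemma reaction_prob_left_mem_Icc {lam φ p₀ v : ℝ} (hlam : 0 < lam) (hφ : 0 < φ)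
    (hv : -(1 - (1 - lam) * p₀) / φ ≤ v ∧ v ≤ -((1 - lam) * (1 - p₀)) / φ) :
    1 / lam * (φ * v - (1 - lam) * p₀ + 1) ∈ Set.Icc (0 : ℝ) 1 := by
  convert one_div_mul_add_mem_Icc hlam hφ hv.1 (hv.2.trans_eq (by ring)) using 2
  ring

lemma reaction_prob_right_mem_Icc {lam φ p₀ v : ℝ} (hlam : 0 < lam) (hφ : 0 < φ)
    (hv : (1 - lam) * p₀ / φ ≤ v ∧ v ≤ (lam + (1 - lam) * p₀) / φ) :
    1 / lam * (φ * v - (1 - lam) * p₀) ∈ Set.Icc (0 : ℝ) 1 := by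
  convert one_div_mul_add_mem_Icc hlam hφ (c := -((1 - lam) * p₀))
    (hv.1.trans_eq' (by ring)) (hv.2.trans_eq (by ring)) using 2
  ring

/-- **Two-point autocratic strategies.** Writing `f(x,y) = α·u_X(x,y) + β·u_Y(x,y) + γ`,
if there are actions `s₁, s₂`, a scalar `φ > 0`, and an initial probability `p₀ ∈ [0,1]`
such that `−(1−(1−lam)p₀)/φ ≤ f(s₁,y) ≤ −(1−lam)(1−p₀)/φ` and
`(1−lam)p₀/φ ≤ f(s₂,y) ≤ (lam+(1−lam)p₀)/φ` for all `y`, then the reaction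
probabilities `p(s₁,y) = (1/lam)(φ f(s₁,y) − (1−lam)p₀ + 1)` and
`p(s₂,y) = (1/lam)(φ f(s₂,y) − (1−lam)p₀)` lie in `[0,1]`, and the two-point
memory-one strategy `σX[x,y] = p(x,y)·δ_{s₁} + (1−p(x,y))·δ_{s₂}` with initial action
`σ0 = p₀·δ_{s₁} + (1−p₀)·δ_{s₂}` enforces `α·π_X + β·π_Y + γ = 0`. -/
theorem two_point_autocratic_strategies
    {SX SY : Type*} [MeasurableSpace SX] [MeasurableSingletonClass SX]
    [MeasurableSpace SY]
    (uX uY : SX × SY → ℝ) (huXm : Measurable uX) (huYm : Measurable uY)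
    (C : ℝ) (huXb : ∀ q, |uX q| ≤ C) (huYb : ∀ q, |uY q| ≤ C)
    (lam : ℝ) (hlam : lam ∈ Set.Ioo (0 : ℝ) 1)
    (α β γ : ℝ)
    (f : SX → SY → ℝ) (hf : ∀ x y, f x y = α * uX (x, y) + β * uY (x, y) + γ)
    (s₁ s₂ : SX) (φ : ℝ) (hφ : 0 < φ) (p₀ : ℝ) (hp₀ : p₀ ∈ Set.Icc (0 : ℝ) 1)
    (hineq₁ : ∀ y, -(1 - (1 - lam) * p₀) / φ ≤ f s₁ y ∧
      f s₁ y ≤ -((1 - lam) * (1 - p₀)) / φ)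
    (hineq₂ : ∀ y, (1 - lam) * p₀ / φ ≤ f s₂ y ∧
      f s₂ y ≤ (lam + (1 - lam) * p₀) / φ)
    (p : SX → SY → ℝ)
    (hp₁ : ∀ y, p s₁ y = (1 / lam) * (φ * f s₁ y - (1 - lam) * p₀ + 1))
    (hp₂ : ∀ y, p s₂ y = (1 / lam) * (φ * f s₂ y - (1 - lam) * p₀))
    (σX : Kernel (SX × SY) SX)
    (hσX : ∀ x ∈ ({s₁, s₂} : Set SX), ∀ y, σX (x, y) =
      ENNReal.ofReal (p x y) • Measure.dirac s₁
        + ENNReal.ofReal (1 - p x y) • Measure.dirac s₂)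
    (σ0 : Measure SX)
    (hσ0 : σ0 = ENNReal.ofReal p₀ • Measure.dirac s₁
        + ENNReal.ofReal (1 - p₀) • Measure.dirac s₂) :
    (∀ x ∈ ({s₁, s₂} : Set SX), ∀ y, 0 ≤ p x y ∧ p x y ≤ 1) ∧
    (∀ ν : ℕ → Measure (SX × SY), (∀ t, IsProbabilityMeasure (ν t)) →
      (∀ E : Set SX, MeasurableSet E → ν 0 (E ×ˢ Set.univ) = σ0 E) →
      (∀ t : ℕ, ∀ E : Set SX, MeasurableSet E →
        ν (t + 1) (E ×ˢ Set.univ) = ∫⁻ q, σX q E ∂ ν t) →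
      α * ((1 - lam) * ∑' t : ℕ, lam ^ t * ∫ q, uX q ∂ ν t)
        + β * ((1 - lam) * ∑' t : ℕ, lam ^ t * ∫ q, uY q ∂ ν t) + γ = 0) := by
  have hlam0 : lam ≠ 0 := hlam.1.ne'
  have hlam_abs : |lam| < 1 := abs_lt.2 ⟨by linarith [hlam.1], hlam.2⟩
  have hpbound : ∀ x ∈ ({s₁, s₂} : Set SX), ∀ y, 0 ≤ p x y ∧ p x y ≤ 1 := by
    rintro x (rfl | rfl) y
    exacts [hp₁ y ▸ reaction_prob_left_mem_Icc hlam.1 hφ (hineq₁ y),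
      hp₂ y ▸ reaction_prob_right_mem_Icc hlam.1 hφ (hineq₂ y)]
  refine ⟨hpbound, fun ν hν h0 hstep => ?_⟩
  have hplay : IsPlaySequence σ0 σX ν := ⟨h0, hstep⟩
  obtain ⟨-, y₀⟩ : Nonempty (SX × SY) := nonempty_of_isProbabilityMeasure (ν 0)
  have hs : s₁ ≠ s₂ := by
    rintro rfl
    have h := (hp₁ y₀).symm.trans (hp₂ y₀)
    exact one_div_ne_zero hlam0 (by linear_combination h)
  have hσ0₁ : σ0.real {s₁} = p₀ := by
    rw [measureReal_def, hσ0, ← twoPointMeasure, twoPointMeasure_singleton_left hs,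
      ENNReal.toReal_ofReal hp₀.1]
  have hsupp : ∀ t, ∀ᵐ q ∂ν t, q.1 ∈ ({s₁, s₂} : Set SX) :=
    hplay.ae_fst_mem (.insert (.singleton s₂) s₁) (by rw [hσ0]; exact twoPointMeasure_compl_pair)
      fun ⟨x, y⟩ hx => by rw [hσX x hx y]; exact twoPointMeasure_compl_pair
  have hbal : ∀ t, ∀ᵐ q ∂ν t, φ * (α * uX q + β * uY q + γ) = lam * (σX q {s₁}).toReal
      - ({s₁} : Set SX).indicator 1 q.1 + (1 - lam) * σ0.real {s₁} := fun t =>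
    (hsupp t).mono fun ⟨x, y⟩ hx => by
      rw [hσX x hx y, ← twoPointMeasure, twoPointMeasure_singleton_left hs,
        ENNReal.toReal_ofReal (hpbound x hx y).1, hσ0₁, ← hf]
      rcases hx with rfl | rfl
      · rw [hp₁, Set.indicator_of_mem (Set.mem_singleton _), Pi.one_apply]
        field_simp
        ring
      · rw [hp₂, Set.indicator_of_notMem (Set.notMem_singleton_iff.2 hs.symm)]
        field_simp
        ring
  have hzero := hplay.discountedPayoff_eq_zero hlam_abs (measurableSet_singleton s₁) hφ.ne' hbal
  rwa [discountedPayoff_affine hlam_abs huXm huYm huXb huYb] at hzero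
end
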